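/- Let A be a symmetric bilinear form on an n-dimensional inner product space with metric g. If the map ω ↦ A∘ω + ω∘A (where ∘ denotes composition of the associated endomorphisms via g) sends every trace-free symmetric form ω to a multiple of ω, uniformly with one constant, then A = (tr_g A / n) g, provided n ≥ 2. -/

import Mathlib

/-!
With `E i j = single i j 1`, testing the hypothesis on `ω = E i j + E j i` (`i ≠ j`) gives
`A i j + A j i = 0` at the `(i, i)` entry, so `A` is diagonal by symmetry; testing it on
`ω = E i i - E j j` gives `2 A i i = λ = 2 A j j`. Hence `A` is a multiple of the identity,
necessarily `tr A / n`.
-/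

namespace Matrix

section single

variable {ι α : Type*} [DecidableEq ι]

theorem isSymm_single_add_single [AddCommMonoid α] (i j : ι) (c : α) :
    (single i j c + single j i c).IsSymm := by
  simp [IsSymm, transpose_single, add_comm]

theorem isSymm_single_sub_single [AddCommGroup α] (i j : ι) (c : α) :
    (single i i c - single j j c).IsSymm := by
  simp [IsSymm, transpose_single]

variable [Fintype ι]

theorem trace_single_add_single [AddCommMonoid α] {i j : ι} (hij : i ≠ j) (c : α) :
    (single i j c + single j i c).trace = 0 := by
  simp [hij, hij.symm]

theorem trace_single_sub_single [AddCommGroup α] (i j : ι) (c : α) :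
    (single i i c - single j j c).trace = 0 := by
  simp

end single

variable {ι K : Type*} [Fintype ι] [DecidableEq ι] [Field K] [CharZero K]

theorem eq_trace_div_card_smul_one {A : Matrix ι ι K} (hoff : ∀ i j, i ≠ j → A i j = 0)
    (hdiag : ∀ i j, A i i = A j j) : A = (A.trace / Fintype.card ι) • 1 := by
  cases isEmpty_or_nonempty ι
  · exact Subsingleton.elim _ _
  obtain ⟨i₀⟩ := ‹Nonempty ι›
  have hscalar : A = A i₀ i₀ • 1 := by
    ext i j
    rcases eq_or_ne i j with rfl | hij
    · simp [hdiag i i₀]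
    · simp [hoff i j hij, hij]
  have hcard : (Fintype.card ι : K) ≠ 0 := Nat.cast_ne_zero.mpr Fintype.card_ne_zero
  calc A = A i₀ i₀ • 1 := hscalar
    _ = ((A i₀ i₀ • 1 : Matrix ι ι K).trace / Fintype.card ι) • 1 := by
      rw [trace_smul, trace_one, smul_eq_mul, mul_div_cancel_right₀ _ hcard]
    _ = (A.trace / Fintype.card ι) • 1 := by rw [← hscalar]

variable {A : Matrix ι ι K} {lam : K}

theorem IsSymm.apply_eq_zero_of_anticomm_eq_smul (hA : A.IsSymm)
    (h : ∀ ω : Matrix ι ι K, ω.IsSymm → ω.trace = 0 → A * ω + ω * A = lam • ω)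
    (i j : ι) (hij : i ≠ j) : A i j = 0 := by
  have hω := h _ (isSymm_single_add_single i j 1) (trace_single_add_single hij 1)
  have hii : A i j + A j i = 0 := by
    simpa [mul_add, add_mul, hij, hij.symm] using congr_fun₂ hω i i
  simpa [hA.apply i j] using hii

theorem diag_eq_of_anticomm_eq_smul
    (h : ∀ ω : Matrix ι ι K, ω.IsSymm → ω.trace = 0 → A * ω + ω * A = lam • ω)
    (i j : ι) : A i i = A j j := by
  rcases eq_or_ne i j with rfl | hij
  · rfl
  have hω := h _ (isSymm_single_sub_single i j 1) (trace_single_sub_single i j 1)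
  have hii : A i i + A i i = lam := by
    simpa [mul_sub, sub_mul, hij, hij.symm] using congr_fun₂ hω i i
  have hjj : -A j j + -A j j = -lam := by
    simpa [mul_sub, sub_mul, hij, hij.symm] using congr_fun₂ hω j j
  linear_combination (hii + hjj) / 2

end Matrix

theorem stmt_4_general (n : ℕ) (A : Matrix (Fin n) (Fin n) ℝ) (hA : A.IsSymm)
    (h : ∃ lam : ℝ, ∀ ω : Matrix (Fin n) (Fin n) ℝ, ω.IsSymm → ω.trace = 0 →
      A * ω + ω * A = lam • ω) :
    A = (A.trace / n) • (1 : Matrix (Fin n) (Fin n) ℝ) := by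
  obtain ⟨lam, h⟩ := h
  simpa using Matrix.eq_trace_div_card_smul_one (hA.apply_eq_zero_of_anticomm_eq_smul h)
    (Matrix.diag_eq_of_anticomm_eq_smul h)

/-- If the anticommutator map `ω ↦ A*ω + ω*A` (composition of the
associated endomorphisms, in an orthonormal basis) sends every trace-free symmetric
form `ω` to `λ • ω` with a single constant `λ`, then `A = (tr A / n) • g`, for `n ≥ 2`. -/
theorem stmt_4 (n : ℕ) (hn : 2 ≤ n) (A : Matrix (Fin n) (Fin n) ℝ) (hA : A.IsSymm)
    (h : ∃ lam : ℝ, ∀ ω : Matrix (Fin n) (Fin n) ℝ, ω.IsSymm → ω.trace = 0 →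
      A * ω + ω * A = lam • ω) :
    A = (A.trace / n) • (1 : Matrix (Fin n) (Fin n) ℝ) :=
  stmt_4_general n A hA h
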